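/- Let N ≥ 2, let Ẑ be a self-adjoint complex L×L matrix, take right boundary condition Z = 0, and let E ∈ ℝ. Then the 2L×L matrix Φ^E_N = 𝒯^E(N,0) · (1; −Ẑ) is a Lagrangian frame, U^E_N = Π(Φ^E_N) is unitary, and the multiplicity of E as an eigenvalue of H^N_{Ẑ,0} equals the multiplicity of −1 as an eigenvalue of U^E_N; that is, dim_ℂ ker(H^N_{Ẑ,0} − E·1) = dim_ℂ ker(U^E_N + 1). -/

import Mathlib

/-!
At real energy every transfer matrix satisfies `𝒯ᴴ J 𝒯 = J`, so `𝒯^E(N,0)` carries the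
Lagrangian frame `(1; −Ẑ)` to a Lagrangian frame `Φ = (a; b)`. Being Lagrangian means that
`aᴴ b` is Hermitian, so `(a ± i b)ᴴ (a ± i b) = Φᴴ Φ`, which is invertible; hence `Π(Φ)` is
unitary, and `Π(Φ) + 1 = 2 a (a + i b)⁻¹` has a kernel of the same dimension as `a`.

An eigenvector of `H^N_{Ẑ,0}` is determined by its value `v` at site `1` through the transfer
recursion: its value at site `n` is the bottom block of `𝒯^E(n,0) (1; −Ẑ) v`. The recursion
reproduces every eigenvalue equation except the last one, which says exactly that `a v = 0`.
So `ker (H − E) ≅ ker a` as well.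
-/

open MeasureTheory Matrix
open scoped ComplexOrder

noncomputable section

/-- The space of complex `L × L` matrices. -/
abbrev Mat (L : ℕ) := Matrix (Fin L) (Fin L) ℂ

/-- The `2L × 2L` transfer matrix `[[(z − V)T⁻¹, −T^*], [T⁻¹, 0]]`. -/
def transferM (L : ℕ) (z : ℂ) (T V : Mat L) : Matrix (Fin L ⊕ Fin L) (Fin L ⊕ Fin L) ℂ :=
  Matrix.fromBlocks ((z • (1 : Mat L) - V) * T⁻¹) (-(Tᴴ)) T⁻¹ 0

/-- The transfer matrix across the sample, `𝒯^z(N,0) = 𝒯_N^z ⋯ 𝒯_1^z`. -/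
def transferProd (L N : ℕ) (T V : ℕ → Mat L) (z : ℂ) :
    Matrix (Fin L ⊕ Fin L) (Fin L ⊕ Fin L) ℂ :=
  (((List.range N).map (fun n => transferM L z (T (n + 1)) (V (n + 1)))).reverse).prod

/-- The block tridiagonal Jacobi matrix `H^N_{Ẑ,Z}` (sites `1,…,N` are indexed by `Fin N`). -/
def jacobi (L N : ℕ) (T V : ℕ → Mat L) (Zh Z : Mat L) :
    Matrix (Fin N × Fin L) (Fin N × Fin L) ℂ :=
  Matrix.of fun p q =>
    if p.1 = q.1 then
      (V (p.1.val + 1) - (if p.1.val = 0 then Zh else 0)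
        - (if p.1.val = N - 1 then Z else 0)) p.2 q.2
    else if q.1.val = p.1.val + 1 then T (p.1.val + 2) p.2 q.2
    else if p.1.val = q.1.val + 1 then (T (q.1.val + 2))ᴴ p.2 q.2
    else 0

/-- The symplectic form `J = [[0, −1], [1, 0]]` in `L × L` blocks. -/
def symJ (L : ℕ) : Matrix (Fin L ⊕ Fin L) (Fin L ⊕ Fin L) ℂ := Matrix.fromBlocks 0 (-1) 1 0

/-- Top `L × L` block of a `2L × L` matrix. -/
def topBlk (L : ℕ) (Φ : Matrix (Fin L ⊕ Fin L) (Fin L) ℂ) : Mat L :=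
  Matrix.of fun i j => Φ (Sum.inl i) j

/-- Bottom `L × L` block of a `2L × L` matrix. -/
def botBlk (L : ℕ) (Φ : Matrix (Fin L ⊕ Fin L) (Fin L) ℂ) : Mat L :=
  Matrix.of fun i j => Φ (Sum.inr i) j

/-- A Lagrangian frame: a `2L × L` matrix of maximal rank `L` with `Φ^* J Φ = 0`. -/
def IsLagFrame (L : ℕ) (Φ : Matrix (Fin L ⊕ Fin L) (Fin L) ℂ) : Prop :=
  Φ.rank = L ∧ Φᴴ * symJ L * Φ = 0

/-- The stereographic map `Π(Φ) = (a − i b)(a + i b)⁻¹` for `Φ = (a; b)`. -/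
def PiMap (L : ℕ) (Φ : Matrix (Fin L ⊕ Fin L) (Fin L) ℂ) : Mat L :=
  (topBlk L Φ - Complex.I • botBlk L Φ) * (topBlk L Φ + Complex.I • botBlk L Φ)⁻¹

theorem Matrix.finrank_ker_mulVecLin_add_rank {m n K : Type*} [Fintype m] [Fintype n] [Field K]
    (M : Matrix m n K) :
    Module.finrank K (LinearMap.ker M.mulVecLin) + M.rank = Fintype.card n := by
  rw [Matrix.rank, add_comm, LinearMap.finrank_range_add_finrank_ker,
    Module.finrank_fintype_fun_eq_card]

theorem Matrix.ker_mulVecLin_eq_bot_of_rank_eq {m n K : Type*} [Fintype m] [Fintype n] [Field K]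
    {M : Matrix m n K} (h : M.rank = Fintype.card n) : LinearMap.ker M.mulVecLin = ⊥ := by
  have := M.finrank_ker_mulVecLin_add_rank
  exact Submodule.finrank_eq_zero.mp (by omega)

theorem Matrix.finrank_ker_mul_of_isUnit_det {m n K : Type*} [Fintype m] [Fintype n]
    [DecidableEq n] [Field K] (A : Matrix m n K) {B : Matrix n n K} (hB : IsUnit B.det) :
    Module.finrank K (LinearMap.ker (A * B).mulVecLin)
      = Module.finrank K (LinearMap.ker A.mulVecLin) := by
  have hAB := (A * B).finrank_ker_mulVecLin_add_rank
  have hA := A.finrank_ker_mulVecLin_add_rank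
  rw [rank_mul_eq_left_of_isUnit_det B A hB] at hAB
  omega

theorem Matrix.mul_nonsing_inv_mem_unitaryGroup {n R : Type*} [Fintype n] [DecidableEq n]
    [CommRing R] [StarRing R] {c d : Matrix n n R} (hc : IsUnit c.det)
    (h : dᴴ * d = cᴴ * c) : d * c⁻¹ ∈ unitaryGroup n R := by
  rw [mem_unitaryGroup_iff', star_eq_conjTranspose, conjTranspose_mul]
  calc (c⁻¹)ᴴ * dᴴ * (d * c⁻¹) = (c⁻¹)ᴴ * (dᴴ * d) * c⁻¹ := by simp only [Matrix.mul_assoc]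
    _ = (c * c⁻¹)ᴴ * (c * c⁻¹) := by
        rw [h, conjTranspose_mul]; simp only [Matrix.mul_assoc]
    _ = 1 := by rw [mul_nonsing_inv c hc, conjTranspose_one, Matrix.one_mul]

section LagrangianFrame

variable {L : ℕ}

theorem fromRows_topBlk_botBlk (Φ : Matrix (Fin L ⊕ Fin L) (Fin L) ℂ) :
    fromRows (topBlk L Φ) (botBlk L Φ) = Φ := by
  ext (i | i) j <;> rfl

theorem conjTranspose_mul_self_eq_topBlk_add_botBlk (Φ : Matrix (Fin L ⊕ Fin L) (Fin L) ℂ) :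
    Φᴴ * Φ = (topBlk L Φ)ᴴ * topBlk L Φ + (botBlk L Φ)ᴴ * botBlk L Φ := by
  conv_lhs => rw [← fromRows_topBlk_botBlk Φ]
  rw [conjTranspose_fromRows_eq_fromCols_conjTranspose, fromCols_mul_fromRows]

theorem conjTranspose_mul_symJ_mul_self (Φ : Matrix (Fin L ⊕ Fin L) (Fin L) ℂ) :
    Φᴴ * symJ L * Φ = (botBlk L Φ)ᴴ * topBlk L Φ - (topBlk L Φ)ᴴ * botBlk L Φ := by
  conv_lhs => rw [← fromRows_topBlk_botBlk Φ]
  rw [symJ, conjTranspose_fromRows_eq_fromCols_conjTranspose, Matrix.mul_assoc,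
    fromBlocks_mul_fromRows, fromCols_mul_fromRows]
  simp only [Matrix.zero_mul, Matrix.neg_mul, Matrix.one_mul, Matrix.mul_neg, zero_add, add_zero]
  abel

theorem isLagFrame_fromRows_one_neg {Zh : Mat L} (hZh : Zh.IsHermitian) :
    IsLagFrame L (fromRows 1 (-Zh)) := by
  refine ⟨le_antisymm ((rank_le_card_width _).trans_eq (Fintype.card_fin L)) ?_, ?_⟩
  · calc L = (fromCols (1 : Mat L) (0 : Mat L) * fromRows (1 : Mat L) (-Zh) : Mat L).rank := by
          rw [fromCols_mul_fromRows]; simp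
      _ ≤ (fromRows (1 : Mat L) (-Zh)).rank := rank_mul_le_right _ _
  · rw [conjTranspose_mul_symJ_mul_self]
    change (-Zh)ᴴ * 1 - 1ᴴ * (-Zh) = 0
    simp [hZh.eq]

theorem IsLagFrame.conjTranspose_mul_self_topBlk_add_smul_botBlk {Φ} (hΦ : IsLagFrame L Φ)
    {s : ℂ} (hs : star s = -s) (hs1 : star s * s = 1) :
    (topBlk L Φ + s • botBlk L Φ)ᴴ * (topBlk L Φ + s • botBlk L Φ) = Φᴴ * Φ := by
  have hab : (botBlk L Φ)ᴴ * topBlk L Φ = (topBlk L Φ)ᴴ * botBlk L Φ :=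
    sub_eq_zero.mp ((conjTranspose_mul_symJ_mul_self Φ).symm.trans hΦ.2)
  rw [conjTranspose_mul_self_eq_topBlk_add_botBlk, conjTranspose_add, conjTranspose_smul,
    Matrix.add_mul, Matrix.mul_add, Matrix.mul_add]
  simp only [Matrix.smul_mul, Matrix.mul_smul, smul_smul, hab]
  rw [mul_comm s, hs1, one_smul, hs, neg_smul]
  abel

theorem IsLagFrame.isUnit_det_topBlk_add_I_smul_botBlk {Φ} (hΦ : IsLagFrame L Φ) :
    IsUnit (topBlk L Φ + Complex.I • botBlk L Φ).det := by
  rw [← isUnit_iff_isUnit_det, ← mulVec_injective_iff_isUnit]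
  change Function.Injective (mulVecLin _)
  rw [← LinearMap.ker_eq_bot, ← ker_mulVecLin_conjTranspose_mul_self,
    hΦ.conjTranspose_mul_self_topBlk_add_smul_botBlk (by simp) (by simp),
    ker_mulVecLin_conjTranspose_mul_self]
  exact ker_mulVecLin_eq_bot_of_rank_eq (by simpa using hΦ.1)

theorem IsLagFrame.piMap_mem_unitaryGroup {Φ} (hΦ : IsLagFrame L Φ) :
    PiMap L Φ ∈ unitaryGroup (Fin L) ℂ := by
  refine mul_nonsing_inv_mem_unitaryGroup hΦ.isUnit_det_topBlk_add_I_smul_botBlk ?_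
  rw [sub_eq_add_neg, ← neg_smul, hΦ.conjTranspose_mul_self_topBlk_add_smul_botBlk (by simp)
    (by simp), hΦ.conjTranspose_mul_self_topBlk_add_smul_botBlk (by simp) (by simp)]

theorem IsLagFrame.finrank_ker_piMap_add_one {Φ} (hΦ : IsLagFrame L Φ) :
    Module.finrank ℂ (LinearMap.ker (PiMap L Φ + 1).mulVecLin)
      = Module.finrank ℂ (LinearMap.ker (topBlk L Φ).mulVecLin) := by
  set c := topBlk L Φ + Complex.I • botBlk L Φ
  have hc : IsUnit c.det := hΦ.isUnit_det_topBlk_add_I_smul_botBlk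
  -- `Π + 1 = ((a - i b) + (a + i b)) (a + i b)⁻¹ = a (2 (a + i b)⁻¹)`
  have hPi : PiMap L Φ + 1 = topBlk L Φ * ((2 : ℂ) • c⁻¹) := by
    rw [PiMap, ← mul_nonsing_inv c hc, ← Matrix.add_mul, Matrix.mul_smul, ← Matrix.smul_mul]
    congr 1
    module
  rw [hPi, finrank_ker_mul_of_isUnit_det _ (by simpa [det_smul] using isUnit_nonsing_inv_det c hc)]

end LagrangianFrame

section Transfer

variable {L : ℕ}

theorem transferProd_zero (T V : ℕ → Mat L) (z : ℂ) : transferProd L 0 T V z = 1 := by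
  simp [transferProd]

theorem transferProd_succ (n : ℕ) (T V : ℕ → Mat L) (z : ℂ) :
    transferProd L (n + 1) T V z
      = transferM L z (T (n + 1)) (V (n + 1)) * transferProd L n T V z := by
  simp [transferProd, List.range_succ]

theorem transferM_conjTranspose_mul_symJ_mul (E : ℝ) {T V : Mat L} (hT : IsUnit T)
    (hV : V.IsHermitian) :
    (transferM L E T V)ᴴ * symJ L * transferM L E T V = symJ L := by
  have hTT : T * T⁻¹ = 1 := mul_nonsing_inv T ((isUnit_iff_isUnit_det T).mp hT)
  have hA : ((E : ℂ) • (1 : Mat L) - V)ᴴ = (E : ℂ) • 1 - V := by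
    simp [conjTranspose_sub, hV.eq]
  rw [transferM, symJ, fromBlocks_conjTranspose, fromBlocks_multiply, fromBlocks_multiply,
    fromBlocks_inj]
  refine ⟨?_, ?_, ?_, ?_⟩
  · rw [conjTranspose_mul, hA]
    simp [Matrix.mul_assoc]
  · simp [← conjTranspose_mul, hTT]
  · simp [hTT]
  · simp

theorem transferProd_conjTranspose_mul_symJ_mul {N : ℕ} {T V : ℕ → Mat L} (E : ℝ)
    (hT : ∀ n, 1 ≤ n → n ≤ N → IsUnit (T n)) (hV : ∀ n, 1 ≤ n → n ≤ N → (V n).IsHermitian) :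
    (transferProd L N T V E)ᴴ * symJ L * transferProd L N T V E = symJ L := by
  induction N with
  | zero => simp [transferProd_zero]
  | succ n ih =>
    have hstep := transferM_conjTranspose_mul_symJ_mul E (hT (n + 1) le_add_self le_rfl)
      (hV (n + 1) le_add_self le_rfl)
    rw [transferProd_succ, conjTranspose_mul]
    calc _ = (transferProd L n T V E)ᴴ * ((transferM L E (T (n + 1)) (V (n + 1)))ᴴ * symJ L *
          transferM L E (T (n + 1)) (V (n + 1))) * transferProd L n T V E := by
          simp only [Matrix.mul_assoc]
      _ = symJ L := by
          rw [hstep, ih (fun k hk hkn => hT k hk (by omega)) (fun k hk hkn => hV k hk (by omega))]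

theorem isUnit_det_of_conjTranspose_mul_symJ_mul {M : Matrix (Fin L ⊕ Fin L) (Fin L ⊕ Fin L) ℂ}
    (hM : Mᴴ * symJ L * M = symJ L) : IsUnit M.det := by
  have hJ : IsUnit (symJ L).det := by
    rw [← isUnit_iff_isUnit_det]
    refine ⟨⟨symJ L, fromBlocks 0 1 (-1) 0, ?_, ?_⟩, rfl⟩ <;>
      simp [symJ, fromBlocks_multiply, ← fromBlocks_one]
  rw [← hM, det_mul, det_mul] at hJ
  exact isUnit_of_mul_isUnit_right hJ

theorem IsLagFrame.mul {M : Matrix (Fin L ⊕ Fin L) (Fin L ⊕ Fin L) ℂ}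
    {Φ : Matrix (Fin L ⊕ Fin L) (Fin L) ℂ} (hΦ : IsLagFrame L Φ)
    (hM : Mᴴ * symJ L * M = symJ L) : IsLagFrame L (M * Φ) := by
  refine ⟨by rw [rank_mul_eq_right_of_isUnit_det _ _ (isUnit_det_of_conjTranspose_mul_symJ_mul hM),
    hΦ.1], ?_⟩
  calc (M * Φ)ᴴ * symJ L * (M * Φ) = Φᴴ * (Mᴴ * symJ L * M) * Φ := by
        simp only [conjTranspose_mul, Matrix.mul_assoc]
    _ = 0 := by rw [hM, hΦ.2]

end Transfer

section Jacobi

variable {L N : ℕ}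

/-- `ψ` at site `n`, where the sites are `1, …, N` (index `k : Fin N` is site `k + 1`) and `ψ` is
extended by zero to all `n : ℕ`. -/
def siteVec (ψ : Fin N × Fin L → ℂ) : ℕ → Fin L → ℂ
  | 0 => 0
  | n + 1 => if h : n < N then fun i => ψ (⟨n, h⟩, i) else 0

theorem siteVec_eq_sum (ψ : Fin N × Fin L → ℂ) (n : ℕ) (j : Fin L) :
    siteVec ψ n j = ∑ m : Fin N, if m.val + 1 = n then ψ (m, j) else 0 := by
  cases n with
  | zero => simp [siteVec]
  | succ n =>
    simp only [siteVec, Nat.add_right_cancel_iff]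
    split_ifs with h
    · rw [Finset.sum_eq_single ⟨n, h⟩ (fun m _ hm => if_neg (fun h' => hm (Fin.ext h')))
        (by simp)]
      simp
    · exact (Finset.sum_eq_zero fun m _ => if_neg (by omega)).symm

theorem jacobi_sub_smul_mulVec (T V : ℕ → Mat L) (Zh Z : Mat L) (z : ℂ)
    (ψ : Fin N × Fin L → ℂ) (k : Fin N) :
    (fun i => ((jacobi L N T V Zh Z - z • 1) *ᵥ ψ) (k, i))
      = T (k + 2) *ᵥ siteVec ψ (k + 2)
        + (V (k + 1) - (if k.val = 0 then Zh else 0) - (if k.val = N - 1 then Z else 0)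
          - z • 1) *ᵥ siteVec ψ (k + 1)
        + (T (k + 1))ᴴ *ᵥ siteVec ψ k := by
  ext i
  simp only [Pi.add_apply, mulVec, dotProduct, siteVec_eq_sum, Finset.mul_sum,
    Fintype.sum_prod_type]
  simp only [Finset.sum_comm (γ := Fin L), ← Finset.sum_add_distrib]
  refine Finset.sum_congr rfl fun m _ => Finset.sum_congr rfl fun j _ => ?_
  have hk := k.2
  have hm := m.2
  simp only [jacobi, Matrix.sub_apply, Matrix.smul_apply, one_apply, of_apply, Prod.mk.injEq,
    Fin.ext_iff]
  rcases (by omega : m.val = k.val ∨ m.val = k.val + 1 ∨ k.val = m.val + 1 ∨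
      (m.val ≠ k.val ∧ m.val ≠ k.val + 1 ∧ k.val ≠ m.val + 1)) with h | h | h | ⟨h₁, h₂, h₃⟩
  · simp [h]
  · simp [h]; omega
  · simp [h]; omega
  · simp [h₁, h₂, h₃, Ne.symm h₁]; omega

theorem siteVec_sub (ψ φ : Fin N × Fin L → ℂ) (n : ℕ) :
    siteVec (ψ - φ) n = siteVec ψ n - siteVec φ n := by
  ext j
  simp only [siteVec_eq_sum, Pi.sub_apply, ← Finset.sum_sub_distrib, ite_sub_ite, sub_zero]

theorem eq_zero_of_siteVec_one_eq_zero {T : ℕ → Mat L} (V : ℕ → Mat L) (Zh Z : Mat L) (z : ℂ)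
    (hT : ∀ n, 2 ≤ n → n ≤ N → IsUnit (T n)) {ψ : Fin N × Fin L → ℂ} (h₁ : siteVec ψ 1 = 0)
    (hrows : ∀ k : Fin N, k.val + 1 < N →
      (fun i => ((jacobi L N T V Zh Z - z • 1) *ᵥ ψ) (k, i)) = 0) :
    ψ = 0 := by
  have hsite : ∀ n, siteVec ψ n = 0 ∧ siteVec ψ (n + 1) = 0 := by
    intro n
    induction n with
    | zero => exact ⟨rfl, h₁⟩
    | succ n ih =>
      refine ⟨ih.2, ?_⟩
      by_cases hn : n + 1 < N
      · have hrow := jacobi_sub_smul_mulVec T V Zh Z z ψ ⟨n, by omega⟩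
        rw [hrows _ hn, ih.1, ih.2, mulVec_zero, mulVec_zero, add_zero, add_zero,
          ← mulVec_zero (T (n + 2))] at hrow
        exact mulVec_injective_iff_isUnit.mpr (hT (n + 2) le_add_self (by omega)) hrow.symm
      · simp [siteVec, hn]
  ext ⟨k, i⟩
  simpa [siteVec] using congrFun (hsite (k + 1)).1 i

def transferFrame (L n : ℕ) (T V : ℕ → Mat L) (z : ℂ) (Zh : Mat L) :
    Matrix (Fin L ⊕ Fin L) (Fin L) ℂ :=
  transferProd L n T V z * fromRows (1 : Mat L) (-Zh)

/-- Column `v` solves the eigenvalue recursion started from the value `v` at site `1`: its value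
at site `n` is the bottom block of `𝒯^z(n,0) (1; −Ẑ) v`. -/
def transferSol (L N : ℕ) (T V : ℕ → Mat L) (z : ℂ) (Zh : Mat L) :
    Matrix (Fin N × Fin L) (Fin L) ℂ :=
  of fun p j => transferFrame L (p.1 + 1) T V z Zh (Sum.inr p.2) j

theorem transferFrame_zero_mulVec (T V : ℕ → Mat L) (z : ℂ) (Zh : Mat L) (v : Fin L → ℂ) :
    transferFrame L 0 T V z Zh *ᵥ v = Sum.elim v (-(Zh *ᵥ v)) := by
  rw [transferFrame, transferProd_zero, Matrix.one_mul, fromRows_mulVec, one_mulVec, neg_mulVec]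

theorem transferFrame_succ_mulVec (n : ℕ) (T V : ℕ → Mat L) (z : ℂ) (Zh : Mat L)
    (v : Fin L → ℂ) :
    transferFrame L (n + 1) T V z Zh *ᵥ v
      = transferM L z (T (n + 1)) (V (n + 1)) *ᵥ (transferFrame L n T V z Zh *ᵥ v) := by
  rw [transferFrame, transferProd_succ, Matrix.mul_assoc, ← mulVec_mulVec, transferFrame]

theorem transferFrame_succ_mulVec_inr (n : ℕ) (T V : ℕ → Mat L) (z : ℂ) (Zh : Mat L)
    (v : Fin L → ℂ) :
    (transferFrame L (n + 1) T V z Zh *ᵥ v) ∘ Sum.inr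
      = (T (n + 1))⁻¹ *ᵥ ((transferFrame L n T V z Zh *ᵥ v) ∘ Sum.inl) := by
  rw [transferFrame_succ_mulVec, transferM, fromBlocks_mulVec, Sum.elim_comp_inr, zero_mulVec,
    add_zero]

theorem transferFrame_succ_mulVec_inl (n : ℕ) (T V : ℕ → Mat L) (z : ℂ) (Zh : Mat L)
    (v : Fin L → ℂ) :
    (transferFrame L (n + 1) T V z Zh *ᵥ v) ∘ Sum.inl
      = (z • 1 - V (n + 1)) *ᵥ ((transferFrame L (n + 1) T V z Zh *ᵥ v) ∘ Sum.inr)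
        - (T (n + 1))ᴴ *ᵥ ((transferFrame L n T V z Zh *ᵥ v) ∘ Sum.inr) := by
  rw [transferFrame_succ_mulVec_inr, mulVec_mulVec, transferFrame_succ_mulVec, transferM,
    fromBlocks_mulVec, Sum.elim_comp_inl, neg_mulVec, ← sub_eq_add_neg]

theorem siteVec_transferSol_mulVec (T V : ℕ → Mat L) (z : ℂ) (Zh : Mat L) (v : Fin L → ℂ)
    {n : ℕ} (h₁ : 1 ≤ n) (hN : n ≤ N) :
    siteVec (transferSol L N T V z Zh *ᵥ v) n
      = (transferFrame L n T V z Zh *ᵥ v) ∘ Sum.inr := by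
  obtain ⟨n, rfl⟩ := Nat.exists_eq_add_of_le' h₁
  simp only [siteVec, dif_pos (show n < N by omega)]
  rfl

theorem jacobi_sub_smul_mulVec_transferSol {T : ℕ → Mat L} (V : ℕ → Mat L) (Zh : Mat L)
    (z : ℂ) (hT₁ : T 1 = 1) (hT : ∀ n, 2 ≤ n → n ≤ N → IsUnit (T n)) (v : Fin L → ℂ)
    (k : Fin N) :
    (fun i => ((jacobi L N T V Zh 0 - z • 1) *ᵥ (transferSol L N T V z Zh *ᵥ v)) (k, i))
      = if k.val + 1 = N then -(topBlk L (transferFrame L N T V z Zh) *ᵥ v)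
        else 0 := by
  set s : ℕ → Fin L ⊕ Fin L → ℂ := fun n => transferFrame L n T V z Zh *ᵥ v
  have hbot : ∀ n, s (n + 1) ∘ Sum.inr = (T (n + 1))⁻¹ *ᵥ (s n ∘ Sum.inl) :=
    fun n => transferFrame_succ_mulVec_inr n T V z Zh v
  have htop : ∀ n, s (n + 1) ∘ Sum.inl
      = (z • 1 - V (n + 1)) *ᵥ (s (n + 1) ∘ Sum.inr) - (T (n + 1))ᴴ *ᵥ (s n ∘ Sum.inr) :=
    fun n => transferFrame_succ_mulVec_inl n T V z Zh v
  have hs₀ : s 0 = Sum.elim v (-(Zh *ᵥ v)) := transferFrame_zero_mulVec T V z Zh v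
  have hsite : ∀ n, 1 ≤ n → n ≤ N → siteVec (transferSol L N T V z Zh *ᵥ v) n = s n ∘ Sum.inr :=
    fun n h₁ hN => siteVec_transferSol_mulVec T V z Zh v h₁ hN
  have hnext : T (k + 2) *ᵥ siteVec (transferSol L N T V z Zh *ᵥ v) (k + 2)
      = if k.val + 1 = N then 0 else s (k + 1) ∘ Sum.inl := by
    split_ifs with hk
    · simp [siteVec, hk]
    · rw [hsite _ (by omega) (by omega), hbot, mulVec_mulVec,
        mul_nonsing_inv _ ((isUnit_iff_isUnit_det _).mp (hT _ le_add_self (by omega))),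
        one_mulVec]
  -- at `k = 0` the boundary term `−Ẑ φ_1` plays the role of `T_1ᴴ φ_0`
  have hprev : (T (k + 1))ᴴ *ᵥ siteVec (transferSol L N T V z Zh *ᵥ v) k
      - (if k.val = 0 then Zh else 0) *ᵥ (s (k + 1) ∘ Sum.inr)
      = (T (k + 1))ᴴ *ᵥ (s k ∘ Sum.inr) := by
    rcases Nat.eq_zero_or_pos k.val with hk | hk
    · rw [if_pos hk, hk, hbot, hs₀]
      simp [siteVec, hT₁]
    · rw [if_neg hk.ne', zero_mulVec, sub_zero, hsite _ hk (by omega)]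
  rw [jacobi_sub_smul_mulVec, hnext, hsite _ le_add_self (by omega)]
  have hmid : (V (k + 1) - (if k.val = 0 then Zh else 0) - (if k.val = N - 1 then 0 else 0)
        - z • 1) *ᵥ (s (k + 1) ∘ Sum.inr)
      + (T (k + 1))ᴴ *ᵥ siteVec (transferSol L N T V z Zh *ᵥ v) k = -(s (k + 1) ∘ Sum.inl) := by
    rw [htop, ← hprev, ite_self, sub_zero]
    simp only [sub_mulVec]
    abel
  rw [add_assoc, hmid]
  split_ifs with hk
  · rw [zero_add, hk]
    rfl
  · exact add_neg_cancel _

theorem siteVec_one_transferSol_mulVec {T : ℕ → Mat L} (V : ℕ → Mat L) (z : ℂ) (Zh : Mat L)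
    (hN : 1 ≤ N) (hT₁ : T 1 = 1) (v : Fin L → ℂ) :
    siteVec (transferSol L N T V z Zh *ᵥ v) 1 = v := by
  rw [siteVec_transferSol_mulVec T V z Zh v le_rfl hN, ← zero_add 1,
    transferFrame_succ_mulVec_inr, transferFrame_zero_mulVec, hT₁, inv_one, one_mulVec]
  rfl

theorem ker_jacobi_sub_smul_eq_map {T : ℕ → Mat L} (V : ℕ → Mat L) (Zh : Mat L) (z : ℂ)
    (hN : 1 ≤ N) (hT₁ : T 1 = 1) (hT : ∀ n, 2 ≤ n → n ≤ N → IsUnit (T n)) :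
    LinearMap.ker (jacobi L N T V Zh 0 - z • 1).mulVecLin
      = (LinearMap.ker (topBlk L (transferFrame L N T V z Zh)).mulVecLin).map
          (transferSol L N T V z Zh).mulVecLin := by
  have hsol := jacobi_sub_smul_mulVec_transferSol V Zh z hT₁ hT
  ext ψ
  simp only [LinearMap.mem_ker, Submodule.mem_map, mulVecLin_apply]
  constructor
  · intro hψ
    set v := siteVec ψ 1
    have hψv : ψ - transferSol L N T V z Zh *ᵥ v = 0 := by
      refine eq_zero_of_siteVec_one_eq_zero V Zh 0 z hT ?_ fun k hk => ?_
      · rw [siteVec_sub, siteVec_one_transferSol_mulVec V z Zh hN hT₁, sub_self]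
      · rw [mulVec_sub, hψ]
        ext i
        simpa [hk.ne] using congrFun (hsol v k) i
    refine ⟨v, ?_, (sub_eq_zero.mp hψv).symm⟩
    have hlast := hsol v ⟨N - 1, by omega⟩
    rw [← sub_eq_zero.mp hψv, hψ, if_pos (by simp; omega)] at hlast
    exact neg_eq_zero.mp (funext fun i => (congrFun hlast i).symm)
  · rintro ⟨v, hv, rfl⟩
    ext ⟨k, i⟩
    simpa [hv] using congrFun (hsol v k) i

theorem finrank_ker_jacobi_sub_smul {T : ℕ → Mat L} (V : ℕ → Mat L) (Zh : Mat L) (z : ℂ)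
    (hN : 1 ≤ N) (hT₁ : T 1 = 1) (hT : ∀ n, 2 ≤ n → n ≤ N → IsUnit (T n)) :
    Module.finrank ℂ (LinearMap.ker (jacobi L N T V Zh 0 - z • 1).mulVecLin)
      = Module.finrank ℂ (LinearMap.ker (topBlk L (transferFrame L N T V z Zh)).mulVecLin) := by
  have hinj : Function.Injective (transferSol L N T V z Zh).mulVecLin := fun v w hvw => by
    rw [← siteVec_one_transferSol_mulVec V z Zh hN hT₁ v,
      ← siteVec_one_transferSol_mulVec V z Zh hN hT₁ w]
    exact congrArg (siteVec · 1) hvw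
  rw [ker_jacobi_sub_smul_eq_map V Zh z hN hT₁ hT]
  exact (Submodule.equivMapOfInjective _ hinj _).finrank_eq.symm

end Jacobi

theorem stmt4_general (L N : ℕ) (hN : 2 ≤ N)
    (T V : ℕ → Mat L) (hT1 : T 1 = 1)
    (hTinv : ∀ n, 2 ≤ n → n ≤ N → IsUnit (T n))
    (hV : ∀ n, 1 ≤ n → n ≤ N → (V n).IsHermitian)
    (Zh : Mat L) (hZh : Zh.IsHermitian) (E : ℝ) :
    IsLagFrame L (transferProd L N T V (E : ℂ) * Matrix.fromRows 1 (-Zh)) ∧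
    PiMap L (transferProd L N T V (E : ℂ) * Matrix.fromRows 1 (-Zh))
      ∈ Matrix.unitaryGroup (Fin L) ℂ ∧
    Module.finrank ℂ
      (LinearMap.ker (jacobi L N T V Zh 0 - (E : ℂ) • 1).mulVecLin) =
    Module.finrank ℂ
      (LinearMap.ker (PiMap L (transferProd L N T V (E : ℂ) * Matrix.fromRows 1 (-Zh))
        + 1).mulVecLin) := by
  have hT : ∀ n, 1 ≤ n → n ≤ N → IsUnit (T n) := fun n h₁ hn =>
    (eq_or_lt_of_le h₁).elim (fun h => h ▸ hT1 ▸ isUnit_one) (fun h => hTinv n h hn)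
  have hΦ : IsLagFrame L (transferFrame L N T V E Zh) :=
    (isLagFrame_fromRows_one_neg hZh).mul (transferProd_conjTranspose_mul_symJ_mul E hT hV)
  refine ⟨hΦ, hΦ.piMap_mem_unitaryGroup, ?_⟩
  -- the product in the statement elaborates with `CStarMatrix`'s `HMul` instance, which is
  -- `transferFrame` only up to unfolding
  change _ = Module.finrank ℂ (LinearMap.ker (PiMap L (transferFrame L N T V E Zh) + 1).mulVecLin)
  rw [hΦ.finrank_ker_piMap_add_one, finrank_ker_jacobi_sub_smul V Zh E (by omega) hT1 hTinv]

theorem stmt4 (L N : ℕ) (hL : 1 ≤ L) (hN : 2 ≤ N)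
    (T V : ℕ → Mat L) (hT1 : T 1 = 1)
    (hTinv : ∀ n, 2 ≤ n → n ≤ N → IsUnit (T n))
    (hV : ∀ n, 1 ≤ n → n ≤ N → (V n).IsHermitian)
    (Zh : Mat L) (hZh : Zh.IsHermitian) (E : ℝ) :
    IsLagFrame L (transferProd L N T V (E : ℂ) * Matrix.fromRows 1 (-Zh)) ∧
    PiMap L (transferProd L N T V (E : ℂ) * Matrix.fromRows 1 (-Zh))
      ∈ Matrix.unitaryGroup (Fin L) ℂ ∧
    Module.finrank ℂ
      (LinearMap.ker (jacobi L N T V Zh 0 - (E : ℂ) • 1).mulVecLin) =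
    Module.finrank ℂ
      (LinearMap.ker (PiMap L (transferProd L N T V (E : ℂ) * Matrix.fromRows 1 (-Zh))
        + 1).mulVecLin) :=
  stmt4_general L N hN T V hT1 hTinv hV Zh hZh E
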